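/- In the universal enveloping algebra of sl_2 over ℚ with standard basis e, h, f, the divided powers satisfy e^{(k)} f^{(m)} = Σ_{j=0}^{min(k,m)} f^{(m−j)} · (h − m − k + 2j choose j) · e^{(k−j)}, where x^{(r)} = x^r/r!. -/

import Mathlib

/-!
Induction on `k`, after multiplying the formula for `k + 1` by `k + 1`, i.e. applying `e` on the
left to the formula for `k`. On a single term `f^{(n)} (h - a choose j) e^{(p)}`, the element `e`
passes `f^{(n)}` at the cost of `f^{(n-1)} (h - n + 1)`, passes the binomial by shifting `a` by
`2`, and is absorbed by `e^{(p)}` with the factor `p + 1`. Writing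
`(h - n + 1) (h - a choose j) = (j + 1) (h - a + 1 choose j + 1) + (a - n) (h - a choose j)` and
using Pascal's rule, the terms regroup into `k + 1` times the formula for `k + 1`.
-/

open scoped Nat

namespace Sl2

theorem sum_range_add_eq_add_sum_shift {M : Type*} [AddCommMonoid M] (U V : ℕ → M) (n : ℕ)
    (hU : U n = 0) :
    ∑ j ∈ Finset.range n, (U j + V j) = U 0 + ∑ j ∈ Finset.range n, (U (j + 1) + V j) := by
  rw [Finset.sum_add_distrib, Finset.sum_add_distrib, ← add_assoc, add_comm (U 0),
    ← Finset.sum_range_succ', Finset.sum_range_succ, hU, add_zero]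

variable {A : Type*} [Ring A] [Algebra ℚ A]

theorem inv_factorial_succ_mul (n : ℕ) : ((n + 1)! : ℚ)⁻¹ * (n + 1) = (n ! : ℚ)⁻¹ := by
  rw [Nat.factorial_succ]
  push_cast
  field_simp

/-- Divided powers indexed by `ℤ`, vanishing at negative indices so that no boundary terms
appear when sums are shifted. -/
def dividedPow (x : A) : ℤ → A
  | (n : ℕ) => (n ! : ℚ)⁻¹ • x ^ n
  | Int.negSucc _ => 0

theorem dividedPow_natCast (x : A) (n : ℕ) : dividedPow x n = (n ! : ℚ)⁻¹ • x ^ n := rfl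

theorem dividedPow_zero (x : A) : dividedPow x 0 = 1 := by
  simpa using dividedPow_natCast x 0

theorem dividedPow_of_neg (x : A) {n : ℤ} (hn : n < 0) : dividedPow x n = 0 := by
  cases n with
  | ofNat n => exact absurd hn (by simp)
  | negSucc n => rfl

theorem mul_dividedPow (x : A) (n : ℤ) :
    x * dividedPow x n = ((n : ℚ) + 1) • dividedPow x (n + 1) := by
  cases n with
  | ofNat n =>
    rw [Int.ofNat_eq_natCast, Int.cast_natCast, ← Nat.cast_add_one (R := ℤ), dividedPow_natCast,
      dividedPow_natCast, mul_smul_comm, pow_succ', smul_smul, mul_comm, inv_factorial_succ_mul]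
  | negSucc n =>
    rcases n with _ | n
    · simp [dividedPow_of_neg]
    · rw [dividedPow_of_neg x (by omega), dividedPow_of_neg x (by omega), mul_zero, smul_zero]

def fallingProd (h : A) (a : ℤ) : ℕ → A
  | 0 => 1
  | j + 1 => fallingProd h a j * (h - ((a + j : ℤ) : ℚ) • 1)

/-- `binom h a j` is `(h - a choose j)`. -/
def binom (h : A) (a : ℤ) (j : ℕ) : A := (j ! : ℚ)⁻¹ • fallingProd h a j

section Binom

variable (h : A)

theorem fallingProd_zero (a : ℤ) : fallingProd h a 0 = 1 := rfl

theorem fallingProd_succ (a : ℤ) (j : ℕ) :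
    fallingProd h a (j + 1) = fallingProd h a j * (h - ((a + j : ℤ) : ℚ) • 1) := rfl

theorem fallingProd_succ' (a : ℤ) (j : ℕ) :
    fallingProd h a (j + 1) = (h - (a : ℚ) • 1) * fallingProd h (a + 1) j := by
  induction j with
  | zero => simp [fallingProd_succ, fallingProd_zero]
  | succ j ih =>
    rw [fallingProd_succ, ih, mul_assoc, fallingProd_succ h (a + 1)]
    push_cast
    ring_nf

theorem list_prod_eq_fallingProd (a : ℤ) (j : ℕ) :
    ((List.range j).map fun r => h - ((a + r : ℤ) : ℚ) • (1 : A)).prod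
      = fallingProd h a j := by
  induction j with
  | zero => rfl
  | succ j ih => simp_all [List.range_succ, fallingProd_succ]

theorem commute_fallingProd (a : ℤ) (j : ℕ) : Commute h (fallingProd h a j) := by
  induction j with
  | zero => exact Commute.one_right h
  | succ j ih =>
    exact ih.mul_right ((Commute.refl h).sub_right ((Commute.one_right h).smul_right _))

theorem fallingProd_pascal (a : ℤ) (j : ℕ) :
    fallingProd h a (j + 1)
      = fallingProd h (a + 1) (j + 1) + ((j : ℚ) + 1) • fallingProd h (a + 1) j := by
  rw [fallingProd_succ', fallingProd_succ]
  simp only [sub_mul, mul_sub, smul_mul_assoc, mul_smul_comm, one_mul, mul_one]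
  rw [← (commute_fallingProd h (a + 1) j).eq]
  match_scalars <;> ring

theorem binom_zero (a : ℤ) : binom h a 0 = 1 := by simp [binom, fallingProd_zero]

theorem binom_pascal (a : ℤ) (j : ℕ) :
    binom h a (j + 1) = binom h (a + 1) (j + 1) + binom h (a + 1) j := by
  rw [binom, binom, binom, fallingProd_pascal, smul_add, smul_smul, inv_factorial_succ_mul]

theorem succ_smul_binom (a : ℤ) (j : ℕ) :
    ((j : ℚ) + 1) • binom h a (j + 1) = (h - (a : ℚ) • 1) * binom h (a + 1) j := by
  rw [binom, binom, fallingProd_succ', mul_smul_comm, smul_smul, mul_comm,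
    inv_factorial_succ_mul]

end Binom

section Relations

variable {e h f : A}

theorem e_mul_h_sub (hhe : h * e - e * h = 2 • e) (c : ℚ) :
    e * (h - c • 1) = (h - (c + 2) • 1) * e := by
  rw [sub_eq_iff_eq_add'] at hhe
  simp only [mul_sub, sub_mul, mul_smul_comm, smul_mul_assoc, mul_one, one_mul, hhe]
  match_scalars <;> ring

theorem h_sub_mul_f (hhf : h * f - f * h = -(2 • f)) (c : ℚ) :
    (h - c • 1) * f = f * (h - (c + 2) • 1) := by
  rw [sub_eq_iff_eq_add'] at hhf
  simp only [mul_sub, sub_mul, mul_smul_comm, smul_mul_assoc, mul_one, one_mul, hhf]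
  match_scalars <;> ring

theorem e_mul_fallingProd (hhe : h * e - e * h = 2 • e) (a : ℤ) (j : ℕ) :
    e * fallingProd h a j = fallingProd h (a + 2) j * e := by
  induction j with
  | zero => simp [fallingProd_zero]
  | succ j ih =>
    rw [fallingProd_succ, ← mul_assoc, ih, mul_assoc, e_mul_h_sub hhe, ← mul_assoc,
      fallingProd_succ]
    push_cast
    ring_nf

theorem e_mul_binom (hhe : h * e - e * h = 2 • e) (a : ℤ) (j : ℕ) :
    e * binom h a j = binom h (a + 2) j * e := by
  rw [binom, binom, mul_smul_comm, e_mul_fallingProd hhe, smul_mul_assoc]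

theorem e_mul_f_pow_succ (hef : e * f - f * e = h) (hhf : h * f - f * h = -(2 • f)) (n : ℕ) :
    e * f ^ (n + 1) = f ^ (n + 1) * e + ((n : ℚ) + 1) • (f ^ n * (h - (n : ℚ) • 1)) := by
  rw [sub_eq_iff_eq_add'] at hef
  induction n with
  | zero => simp [hef, add_comm]
  | succ n ih =>
    rw [pow_succ, ← mul_assoc, ih, add_mul, mul_assoc, hef, smul_mul_assoc, mul_assoc,
      h_sub_mul_f hhf, ← mul_assoc, ← pow_succ]
    simp only [mul_add, mul_sub, mul_smul_comm, mul_one, ← mul_assoc, ← pow_succ]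
    push_cast
    match_scalars <;> ring

theorem e_mul_dividedPow_f (hef : e * f - f * e = h) (hhf : h * f - f * h = -(2 • f)) (n : ℤ) :
    e * dividedPow f n
      = dividedPow f n * e + dividedPow f (n - 1) * (h - ((n : ℚ) - 1) • 1) := by
  rcases lt_trichotomy n 0 with hn | rfl | hn
  · simp [dividedPow_of_neg f hn, dividedPow_of_neg f (show n - 1 < 0 by omega)]
  · simp [dividedPow_zero, dividedPow_of_neg f (show (-1 : ℤ) < 0 by omega)]
  · obtain ⟨k, rfl⟩ : ∃ k : ℕ, n = k + 1 := ⟨n.toNat - 1, by omega⟩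
    rw [add_sub_cancel_right, ← Nat.cast_add_one, dividedPow_natCast, dividedPow_natCast,
      mul_smul_comm, e_mul_f_pow_succ hef hhf, smul_add, smul_smul, inv_factorial_succ_mul,
      smul_mul_assoc]
    push_cast
    rw [add_sub_cancel_right, smul_mul_assoc]

theorem e_mul_dividedPow_binom_dividedPow (hef : e * f - f * e = h)
    (hhe : h * e - e * h = 2 • e) (hhf : h * f - f * h = -(2 • f)) (n a p : ℤ) (j : ℕ) :
    e * (dividedPow f n * binom h a j * dividedPow e p)
      = ((p : ℚ) + 1) • (dividedPow f n * binom h (a + 2) j * dividedPow e (p + 1))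
        + dividedPow f (n - 1)
          * (((j : ℚ) + 1) • binom h (a - 1) (j + 1) + ((a - n : ℤ) : ℚ) • binom h a j)
          * dividedPow e p := by
  have hweight : (h - ((n : ℚ) - 1) • 1) * binom h a j
      = ((j : ℚ) + 1) • binom h (a - 1) (j + 1) + ((a - n : ℤ) : ℚ) • binom h a j := by
    rw [succ_smul_binom, sub_add_cancel]
    simp only [sub_mul, smul_mul_assoc, one_mul]
    push_cast
    match_scalars <;> ring
  rw [← mul_assoc, ← mul_assoc, e_mul_dividedPow_f hef hhf, add_mul, add_mul, mul_assoc _ e,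
    e_mul_binom hhe, mul_assoc, mul_assoc, mul_dividedPow, mul_assoc (dividedPow f (n - 1)),
    hweight]
  simp only [mul_smul_comm, mul_assoc]

theorem dividedPow_e_mul_dividedPow_f (hef : e * f - f * e = h)
    (hhe : h * e - e * h = 2 • e) (hhf : h * f - f * h = -(2 • f)) (k m : ℕ) :
    dividedPow e k * dividedPow f m
      = ∑ j ∈ Finset.range (k + 1),
          dividedPow f ((m : ℤ) - j) * binom h ((m : ℤ) + k - 2 * j) j
            * dividedPow e ((k : ℤ) - j) := by
  induction k with
  | zero => simp [dividedPow_zero, binom_zero]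
  | succ k ih =>
    -- `U j + V j` is `e` times the `j`-th term; `U j` feeds the `j`-th and `V j` the
    -- `(j + 1)`-st term of the formula for `k + 1`.
    set U : ℕ → A := fun j => ((k : ℚ) - j + 1) • (dividedPow f ((m : ℤ) - j)
      * binom h ((m : ℤ) + k - 2 * j + 2) j * dividedPow e ((k : ℤ) - j + 1))
    set V : ℕ → A := fun j => dividedPow f ((m : ℤ) - j - 1)
      * (((j : ℚ) + 1) • binom h ((m : ℤ) + k - 2 * j - 1) (j + 1)
        + ((k : ℚ) - j) • binom h ((m : ℤ) + k - 2 * j) j) * dividedPow e ((k : ℤ) - j)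
    have hUV (j : ℕ) : e * (dividedPow f ((m : ℤ) - j) * binom h ((m : ℤ) + k - 2 * j) j
        * dividedPow e ((k : ℤ) - j)) = U j + V j := by
      rw [e_mul_dividedPow_binom_dividedPow hef hhe hhf]
      simp only [U, V]
      push_cast
      ring_nf
    have hU_zero : U 0 = ((k : ℚ) + 1) • (dividedPow f ((m : ℤ) - (0 : ℕ))
        * binom h ((m : ℤ) + (k + 1 : ℕ) - 2 * (0 : ℕ)) 0
        * dividedPow e (((k + 1 : ℕ) : ℤ) - (0 : ℕ))) := by
      simp only [U, binom_zero]
      push_cast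
      ring_nf
    have hUV_succ (j : ℕ) : U (j + 1) + V j
        = ((k : ℚ) + 1) • (dividedPow f (m - (j + 1 : ℕ))
        * binom h ((m : ℤ) + (k + 1 : ℕ) - 2 * (j + 1 : ℕ)) (j + 1)
        * dividedPow e (((k + 1 : ℕ) : ℤ) - (j + 1 : ℕ))) := by
      have hp := congrArg
        (fun X => dividedPow f ((m : ℤ) - j - 1) * X * dividedPow e ((k : ℤ) - j))
        (binom_pascal h ((m : ℤ) + k - 2 * j - 1) j)
      simp only [U, V]
      push_cast at hp ⊢
      ring_nf at hp ⊢
      simp only [mul_add, add_mul, mul_smul_comm, smul_mul_assoc] at hp ⊢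
      linear_combination (norm := module) ((j : ℚ) - k) • hp
    refine smul_right_injective A (show (k : ℚ) + 1 ≠ 0 by positivity) ?_
    simp only
    calc ((k : ℚ) + 1) • (dividedPow e (k + 1 : ℕ) * dividedPow f m)
        = e * (dividedPow e k * dividedPow f m) := by
          rw [← mul_assoc, mul_dividedPow, smul_mul_assoc]
          push_cast
          rfl
      _ = ∑ j ∈ Finset.range (k + 1), (U j + V j) := by
          rw [ih, Finset.mul_sum]
          exact Finset.sum_congr rfl fun j _ => hUV j
      _ = U 0 + ∑ j ∈ Finset.range (k + 1), (U (j + 1) + V j) :=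
          sum_range_add_eq_add_sum_shift U V (k + 1) (by simp [U])
      _ = _ := by
          rw [Finset.smul_sum, Finset.sum_range_succ' _ (k + 1), ← hU_zero, add_comm,
            Finset.sum_congr rfl fun j _ => hUV_succ j]

end Relations

end Sl2

open Sl2

/-- The divided power commutation formula in the universal enveloping algebra of `sl₂`
over ℚ (stated, via the universal property, in any associative ℚ-algebra containing
elements `e, h, f` satisfying the `sl₂` relations):
`e^{(k)} f^{(m)} = ∑_{j=0}^{min(k,m)} f^{(m−j)} (h − m − k + 2j choose j) e^{(k−j)}`,
where `x^{(r)} = x^r/r!` and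
`(h − a choose j) = (h−a)(h−a−1)⋯(h−a−j+1)/j!`. -/
theorem stmt18 (A : Type*) [Ring A] [Algebra ℚ A] (e h f : A)
    (hef : e * f - f * e = h)
    (hhe : h * e - e * h = 2 • e)
    (hhf : h * f - f * h = -(2 • f))
    (k m : ℕ) :
    ((k.factorial : ℚ)⁻¹ • e ^ k) * ((m.factorial : ℚ)⁻¹ • f ^ m)
      = ∑ j ∈ Finset.range (min k m + 1),
          ((m - j).factorial : ℚ)⁻¹ • f ^ (m - j)
          * ((j.factorial : ℚ)⁻¹ •
              ((List.range j).map
                (fun r => h - ((((m : ℤ) + k - 2 * j + r : ℤ) : ℚ)) • (1 : A))).prod)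
          * (((k - j).factorial : ℚ)⁻¹ • e ^ (k - j)) := by
  calc ((k.factorial : ℚ)⁻¹ • e ^ k) * ((m.factorial : ℚ)⁻¹ • f ^ m)
      = dividedPow e k * dividedPow f m := rfl
    _ = ∑ j ∈ Finset.range (k + 1), dividedPow f ((m : ℤ) - j)
          * binom h ((m : ℤ) + k - 2 * j) j * dividedPow e ((k : ℤ) - j) :=
        dividedPow_e_mul_dividedPow_f hef hhe hhf k m
    _ = ∑ j ∈ Finset.range (min k m + 1), dividedPow f ((m : ℤ) - j)
          * binom h ((m : ℤ) + k - 2 * j) j * dividedPow e ((k : ℤ) - j) := by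
        refine (Finset.sum_subset (Finset.range_subset_range.mpr (by omega))
          fun j hj hj' => ?_).symm
        simp only [Finset.mem_range] at hj hj'
        rw [dividedPow_of_neg f (by omega), zero_mul, zero_mul]
    _ = _ := by
        refine Finset.sum_congr rfl fun j hj => ?_
        have hj : j ≤ min k m := Nat.lt_succ_iff.mp (Finset.mem_range.mp hj)
        rw [← Nat.cast_sub (hj.trans (min_le_right k m)),
          ← Nat.cast_sub (hj.trans (min_le_left k m)), dividedPow_natCast, dividedPow_natCast,
          binom, list_prod_eq_fallingProd]
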